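/- For an integer n with n ≠ 1, the quotient of the additive group ℤ[1/n] by the image of the endomorphism x ↦ (1−n)·x is isomorphic to ℤ/(n−1)ℤ, a cyclic group of order |n−1|. -/

import Mathlib

/-- `ℤ[1/n]`: the additive subgroup of `ℚ` of fractions `m / n ^ k`. -/
def Zn (n : ℤ) : AddSubgroup ℚ :=
  AddSubgroup.closure {q : ℚ | ∃ (m : ℤ) (k : ℕ), q = (m : ℚ) / (n : ℚ) ^ k}

/-- The endomorphism of `ℤ[1/n]` given by multiplication by `1 - n`. -/
def oneSubNSmul (n : ℤ) : Zn n →+ Zn n :=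
  AddMonoidHom.mk' (fun x => (1 - n) • x) (fun a b => smul_add (1 - n) a b)

/-!
Modulo `(1 - n) ℤ[1/n]` the integer `n` acts as the identity, so `m / n ^ k` is congruent to
`n ^ k • (m / n ^ k) = m`: every class is represented by an integer. An integer `m` lies in
`(1 - n) ℤ[1/n]` iff `m n ^ k = (1 - n) m'` for some `m'` and `k`, and since
`n ≡ 1 [ZMOD n - 1]` this happens iff `n - 1 ∣ m`. For `n = 0` the map `x ↦ (1 - n) • x`
is the identity and both sides are trivial.
-/

open QuotientAddGroup

lemma intCast_mem_Zn (n m : ℤ) : (m : ℚ) ∈ Zn n :=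
  AddSubgroup.subset_closure ⟨m, 0, by simp⟩

lemma mem_Zn_iff {n : ℤ} (hn : n ≠ 0) {x : ℚ} :
    x ∈ Zn n ↔ ∃ (m : ℤ) (k : ℕ), x = m / (n : ℚ) ^ k := by
  have hn' : (n : ℚ) ≠ 0 := Int.cast_ne_zero.mpr hn
  refine ⟨fun hx => ?_, fun hx => AddSubgroup.subset_closure hx⟩
  induction hx using AddSubgroup.closure_induction with
  | mem y hy => exact hy
  | zero => exact ⟨0, 0, by simp⟩
  | add a b _ _ ha hb =>
    obtain ⟨m, k, rfl⟩ := ha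
    obtain ⟨m', k', rfl⟩ := hb
    refine ⟨m * n ^ k' + m' * n ^ k, k + k', ?_⟩
    field_simp
    push_cast
    ring
  | neg a _ ha =>
    obtain ⟨m, k, rfl⟩ := ha
    exact ⟨-m, k, by push_cast; ring⟩

lemma coe_oneSubNSmul {n : ℤ} (y : Zn n) : (oneSubNSmul n y : ℚ) = (1 - n) * y := by
  simp [oneSubNSmul]

lemma sub_one_dvd_of_dvd_mul_pow {R : Type*} [CommRing R] {a b : R} {k : ℕ}
    (h : a - 1 ∣ b * a ^ k) : a - 1 ∣ b := by
  simpa [mul_sub] using dvd_sub h ((sub_one_dvd_pow_sub_one a k).mul_left b)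

lemma pow_smul_eq_self_of_smul_eq_self {M α : Type*} [Monoid M] [MulAction M α] {m : M}
    {a : α} (h : m • a = a) (k : ℕ) : m ^ k • a = a :=
  pow_mem (S := MulAction.stabilizerSubmonoid M a) h k

namespace Zn

abbrev Quotient (n : ℤ) : Type := Zn n ⧸ (oneSubNSmul n).range

variable {n : ℤ}

def intCast (n : ℤ) : ℤ →+ Zn n :=
  (Int.castAddHom ℚ).codRestrict (Zn n) (intCast_mem_Zn n)

lemma coe_intCast (m : ℤ) : (intCast n m : ℚ) = m := rfl

lemma smul_mk (y : Zn n) : n • (mk y : Quotient n) = mk y := by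
  have h : (1 - n) • (mk y : Quotient n) = 0 := (eq_zero_iff _).2 ⟨y, rfl⟩
  rwa [sub_smul, one_smul, sub_eq_zero, eq_comm] at h

instance : Subsingleton (Quotient 0) := by
  have h (y : Zn 0) : (mk y : Quotient 0) = 0 := by simpa using (smul_mk y).symm
  refine ⟨fun a b => ?_⟩
  induction a using QuotientAddGroup.induction_on
  induction b using QuotientAddGroup.induction_on
  rw [h, h]

lemma mk_comp_intCast_surjective (hn : n ≠ 0) :
    Function.Surjective ((mk' (oneSubNSmul n).range).comp (intCast n)) := by
  intro q
  induction q using QuotientAddGroup.induction_on with | H x =>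
  obtain ⟨m, k, hx⟩ := (mem_Zn_iff hn).1 x.2
  have hx' : n ^ k • x = intCast n m := by
    ext
    have hnk : (n : ℚ) ^ k ≠ 0 := pow_ne_zero k (Int.cast_ne_zero.mpr hn)
    simp [hx, coe_intCast, mul_div_cancel₀ _ hnk]
  refine ⟨m, ?_⟩
  rw [AddMonoidHom.comp_apply, mk'_apply, ← hx', mk_zsmul,
    pow_smul_eq_self_of_smul_eq_self (smul_mk x)]

lemma intCast_mem_range_iff (hn : n ≠ 0) (m : ℤ) :
    intCast n m ∈ (oneSubNSmul n).range ↔ n - 1 ∣ m := by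
  constructor
  · rintro ⟨⟨y, hy⟩, hym⟩
    obtain ⟨m', k, rfl⟩ := (mem_Zn_iff hn).1 hy
    have h : (1 - n) * (m' / n ^ k : ℚ) = m := by
      rw [← coe_intCast (n := n) m, ← hym, coe_oneSubNSmul]
    have hm : m * n ^ k = (1 - n) * m' := by
      rw [← Int.cast_inj (α := ℚ)]
      push_cast
      field_simp at h
      linear_combination -h
    exact sub_one_dvd_of_dvd_mul_pow ⟨-m', by rw [hm]; ring⟩
  · rintro ⟨c, rfl⟩
    refine ⟨intCast n (-c), Subtype.ext ?_⟩
    rw [coe_oneSubNSmul, coe_intCast, coe_intCast]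
    push_cast
    ring

lemma ker_mk_comp_intCast (hn : n ≠ 0) :
    ((mk' (oneSubNSmul n).range).comp (intCast n)).ker = AddSubgroup.zmultiples (n - 1) := by
  ext m
  rw [AddMonoidHom.mem_ker, AddMonoidHom.comp_apply, mk'_apply, eq_zero_iff,
    intCast_mem_range_iff hn, Int.mem_zmultiples_iff]

end Zn

theorem quotient_iso_zmod_general (n : ℤ) :
    Nonempty ((Zn n ⧸ (oneSubNSmul n).range) ≃+ ZMod (n - 1).natAbs) := by
  rcases eq_or_ne n 0 with rfl | hn
  · have : Unique (Zn.Quotient 0) := uniqueOfSubsingleton 0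
    exact ⟨AddEquiv.ofUnique (N := ZMod 1)⟩
  · exact ⟨(quotientKerEquivOfSurjective _ (Zn.mk_comp_intCast_surjective hn)).symm.trans <|
      (quotientAddEquivOfEq (Zn.ker_mk_comp_intCast hn)).trans
        (Int.quotientZMultiplesEquivZMod (n - 1))⟩

/-- For `n ≠ 1`, the quotient of `ℤ[1/n]` by the image of `x ↦ (1 - n) • x` is
isomorphic to `ℤ/(n-1)ℤ`, the cyclic group of order `|n - 1|`. -/
theorem quotient_iso_zmod (n : ℤ) (hn : n ≠ 1) :
    Nonempty ((Zn n ⧸ (oneSubNSmul n).range) ≃+ ZMod (n - 1).natAbs) :=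
  quotient_iso_zmod_general n
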